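/- Let n ≥ 2 and fix a 2-block set partition 𝔅 = {B_1, B_2} of [n]. For every index tree T of order n, among the contractions of the three types P, Q1, Q2 (defined below) having T as source or target, exactly one preserves the invariant ψ = (ψ_1,...,ψ_5). In particular, the set of index trees of order n is partitioned into pairs {T, T'} with T → T' a ψ-preserving contraction. -/

import Mathlib

/-- The binary weight of `A ⊆ [n]`; the reverse binary order compares these weights
in reverse, so the maximal element in reverse binary order has minimal weight. -/
def bval {n : ℕ} (A : Finset (Fin n)) : ℕ := ∑ i ∈ A, 2 ^ (i : ℕ)

/-- Index trees of order `n`, identified with their families of node labels: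
laminar families of nonempty subsets of `[n]` containing `[n]` in which every member
is minimal or the union of its proper subsets in the family. -/
def IsIndexFam (n : ℕ) (S : Finset (Finset (Fin n))) : Prop :=
  (Finset.univ : Finset (Fin n)) ∈ S ∧ (∀ A ∈ S, A.Nonempty) ∧
  (∀ A ∈ S, ∀ B ∈ S, A ∩ B = ∅ ∨ A ⊆ B ∨ B ⊆ A) ∧
  ∀ A ∈ S, (∀ B ∈ S, ¬ B ⊂ A) ∨ ∀ x : Fin n, x ∈ A ↔ ∃ B ∈ S, B ⊂ A ∧ x ∈ B

/-- `Q(T)`: the node labels contained in neither `B₁` nor `B₂`. -/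
def Qset {n : ℕ} (B₁ B₂ : Finset (Fin n)) (S : Finset (Finset (Fin n))) :
    Finset (Finset (Fin n)) :=
  S.filter fun A => ¬ A ⊆ B₁ ∧ ¬ A ⊆ B₂

/-- `L_{d(T)}`: the maximal element of `Q(T)` with respect to the reverse binary
order, i.e. the member of `Q(T)` of minimal binary weight. -/
noncomputable def dLabel {n : ℕ} (B₁ B₂ : Finset (Fin n))
    (S : Finset (Finset (Fin n))) : Finset (Fin n) :=
  if h : (Qset B₁ B₂ S).Nonempty then
    (Finset.exists_min_image (Qset B₁ B₂ S) bval h).choose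
  else ∅

/-- The invariant `ψ(T) = (ψ₁,…,ψ₅)`: writing `D = L_{d(T)}`, it records `D`, the
number of nodes not weakly below `d(T)`, the number of `v ≻ d(T)` with
`L_v ⊊ B₁ ∩ D`, the product of the latter with the number of `v ≻ d(T)` with
`L_v ⊆ B₂ ∩ D`, and the number of `v ≻ d(T)` with `L_v ⊊ B₂ ∩ D`.  (Only equality
of `ψ`-values is used below, so no order on the tuples is needed.) -/
noncomputable def psiInv {n : ℕ} (B₁ B₂ : Finset (Fin n))
    (S : Finset (Finset (Fin n))) : Finset (Fin n) × ℕ × ℕ × ℕ × ℕ :=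
  let D := dLabel B₁ B₂ S
  (D,
   (S.filter fun A => ¬ A ⊆ D).card,
   (S.filter fun A => A ⊂ B₁ ∩ D).card,
   (S.filter fun A => A ⊂ B₁ ∩ D).card * (S.filter fun A => A ⊆ B₂ ∩ D).card,
   (S.filter fun A => A ⊂ B₂ ∩ D).card)

/-- `A` is an internal-node label of the family `S`. -/
def IsInternal {n : ℕ} (S : Finset (Finset (Fin n))) (A : Finset (Fin n)) : Prop :=
  A ∈ S ∧ ∃ B ∈ S, B ⊂ A

/-- Ordinary contraction at the non-root internal node labeled `A`: remove `A`. -/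
def OrdCon {n : ℕ} (S S' : Finset (Finset (Fin n))) (A : Finset (Fin n)) : Prop :=
  IsInternal S A ∧ A ≠ Finset.univ ∧ S' = S.erase A

/-- Exceptional contraction at the internal node labeled `A`, all of whose children
are leaves: remove all proper subsets of `A`. -/
def ExcCon {n : ℕ} (S S' : Finset (Finset (Fin n))) (A : Finset (Fin n)) : Prop :=
  IsInternal S A ∧ (∀ B ∈ S, B ⊂ A → ¬ IsInternal S B) ∧
    S' = S.filter fun B => ¬ B ⊂ A

/-- Type `P`: exceptional contraction at `d(T)`, which has exactly two children,
labeled `B₁ ∩ L_{d(T)}` and `B₂ ∩ L_{d(T)}`. -/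
def TypeP {n : ℕ} (B₁ B₂ : Finset (Fin n)) (S S' : Finset (Finset (Fin n))) : Prop :=
  ExcCon S S' (dLabel B₁ B₂ S) ∧
    S.filter (fun B => B ⊂ dLabel B₁ B₂ S) =
      {B₁ ∩ dLabel B₁ B₂ S, B₂ ∩ dLabel B₁ B₂ S}

/-- Type `Q1`: ordinary contraction at a node labeled `B₁ ∩ L_{d(T)}`. -/
def TypeQ1 {n : ℕ} (B₁ B₂ : Finset (Fin n)) (S S' : Finset (Finset (Fin n))) : Prop :=
  OrdCon S S' (B₁ ∩ dLabel B₁ B₂ S)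

/-- Type `Q2`: ordinary contraction at a node labeled `B₂ ∩ L_{d(T)}`. -/
def TypeQ2 {n : ℕ} (B₁ B₂ : Finset (Fin n)) (S S' : Finset (Finset (Fin n))) : Prop :=
  OrdCon S S' (B₂ ∩ dLabel B₁ B₂ S)

/-- A contraction of one of the three types `P`, `Q1`, `Q2`. -/
def TypedCon {n : ℕ} (B₁ B₂ : Finset (Fin n)) (S S' : Finset (Finset (Fin n))) : Prop :=
  TypeP B₁ B₂ S S' ∨ TypeQ1 B₁ B₂ S S' ∨ TypeQ2 B₁ B₂ S S'

/-
Write `D = L_{d(T)}`, `C₁ = B₁ ∩ D` and `C₂ = B₂ ∩ D`. Since `D` has minimal binary weight in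
`Q(T)`, every node strictly below `d(T)` lies inside `C₁` or `C₂`; and adding or removing a node
contained in `B₁` or `B₂` does not change `Q(T)`, hence not `d(T)`. So a `ψ`-preserving
contraction `U → T` of type `P`, `Q1`, `Q2` is, seen from `T`, exactly one of: `U = T ∪ {C₁}`
where `C₁` has a proper subset in `T`; `U = T ∪ {C₂}` where `C₂` has one and `C₁` has none (the
factor `#{v : L_v ⊆ C₂}` of `ψ₄` grows by one, so `ψ₃` must vanish); `U = T ∪ {C₁, C₂}` where
`d(T)` is a leaf. Reading these conditions off `T` itself (toggle `C₁` if it has a proper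
subset, else toggle `C₂` if it has one, else contract or expand at `d(T)`) yields the unique
partner of `T`.
-/

open Finset

variable {n : ℕ}

lemma nested_symm {α : Type*} [DecidableEq α] {A B : Finset α}
    (h : A ∩ B = ∅ ∨ A ⊆ B ∨ B ⊆ A) : B ∩ A = ∅ ∨ B ⊆ A ∨ A ⊆ B := by
  rw [inter_comm]; tauto

lemma nested_of_subset {α : Type*} [DecidableEq α] {A C D : Finset α}
    (hAD : A ∩ D = ∅ ∨ A ⊆ D ∨ D ⊆ A) (hCD : C ⊆ D)
    (hbelow : A ⊂ D → A ∩ C = ∅ ∨ A ⊆ C) : A ∩ C = ∅ ∨ A ⊆ C ∨ C ⊆ A := by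
  rcases hAD with h | h | h
  · exact Or.inl (subset_empty.mp (h ▸ inter_subset_inter_left hCD))
  · rcases h.eq_or_ssubset with rfl | h
    · exact Or.inr (Or.inr hCD)
    · exact (hbelow h).imp_right Or.inl
  · exact Or.inr (Or.inr (hCD.trans h))

lemma nested_insert {α : Type*} [DecidableEq α] {S : Finset (Finset α)} {C : Finset α}
    (hS : ∀ A ∈ S, ∀ B ∈ S, A ∩ B = ∅ ∨ A ⊆ B ∨ B ⊆ A)
    (hC : ∀ A ∈ S, A ∩ C = ∅ ∨ A ⊆ C ∨ C ⊆ A) :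
    ∀ A ∈ insert C S, ∀ B ∈ insert C S, A ∩ B = ∅ ∨ A ⊆ B ∨ B ⊆ A := by
  simp only [mem_insert]
  rintro A (rfl | hA) B (rfl | hB)
  · exact Or.inr (Or.inl subset_rfl)
  · exact nested_symm (hC B hB)
  · exact hC A hA
  · exact hS A hA B hB

lemma eq_insert_insert_filter_not {α : Type*} [DecidableEq α] {U : Finset α}
    {p : α → Prop} [DecidablePred p] {a b : α} (h : U.filter p = {a, b}) :
    U = insert a (insert b (U.filter fun x => ¬ p x)) := by
  conv_lhs => rw [← filter_union_filter_not_eq p U, h]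
  rw [insert_union, singleton_union]

namespace IsIndexFam

variable {S : Finset (Finset (Fin n))} {A C D : Finset (Fin n)}

lemma of_cover (huniv : (univ : Finset (Fin n)) ∈ S) (hne : ∀ A ∈ S, A.Nonempty)
    (hlam : ∀ A ∈ S, ∀ B ∈ S, A ∩ B = ∅ ∨ A ⊆ B ∨ B ⊆ A)
    (hcov : ∀ A ∈ S, (∃ B ∈ S, B ⊂ A) → ∀ x ∈ A, ∃ B ∈ S, B ⊂ A ∧ x ∈ B) :
    IsIndexFam n S := by
  refine ⟨huniv, hne, hlam, fun A hA => ?_⟩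
  by_cases hint : ∃ B ∈ S, B ⊂ A
  · exact Or.inr fun x => ⟨hcov A hA hint x, fun ⟨B, _, hBA, hxB⟩ => hBA.subset hxB⟩
  · exact Or.inl fun B hB hBA => hint ⟨B, hB, hBA⟩

lemma exists_mem_ssubset (hS : IsIndexFam n S) (hA : A ∈ S) (hint : ∃ B ∈ S, B ⊂ A)
    {x : Fin n} (hx : x ∈ A) : ∃ B ∈ S, B ⊂ A ∧ x ∈ B := by
  rcases hS.2.2.2 A hA with hmin | hcov
  · obtain ⟨B, hB, hBA⟩ := hint
    exact absurd hBA (hmin B hB)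
  · exact (hcov x).mp hx

lemma erase (hS : IsIndexFam n S) (hC : IsInternal S C) (hCu : C ≠ univ) :
    IsIndexFam n (S.erase C) := by
  refine of_cover (mem_erase.mpr ⟨hCu.symm, hS.1⟩) (fun A hA => hS.2.1 A (mem_of_mem_erase hA))
    (fun A hA B hB => hS.2.2.1 A (mem_of_mem_erase hA) B (mem_of_mem_erase hB)) ?_
  rintro A hA ⟨B, hB, hBA⟩ x hx
  obtain ⟨B, hB, hBA, hxB⟩ := hS.exists_mem_ssubset (mem_of_mem_erase hA)
    ⟨B, mem_of_mem_erase hB, hBA⟩ hx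
  by_cases hBC : B = C
  · subst hBC
    obtain ⟨B', hB', hB'B, hxB'⟩ := hS.exists_mem_ssubset hC.1 hC.2 hxB
    exact ⟨B', mem_erase.mpr ⟨hB'B.ne, hB'⟩, hB'B.trans hBA, hxB'⟩
  · exact ⟨B, mem_erase.mpr ⟨hBC, hB⟩, hBA, hxB⟩

lemma insert_of_covered (hS : IsIndexFam n S) (hCne : C.Nonempty)
    (hlamC : ∀ A ∈ S, A ∩ C = ∅ ∨ A ⊆ C ∨ C ⊆ A)
    (hcovC : ∀ x ∈ C, ∃ B ∈ S, B ⊆ C ∧ x ∈ B) : IsIndexFam n (insert C S) := by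
  by_cases hCS : C ∈ S
  · rwa [insert_eq_of_mem hCS]
  refine of_cover (mem_insert_of_mem hS.1) ?_ (nested_insert hS.2.2.1 hlamC) ?_
  · simp only [mem_insert, forall_eq_or_imp]
    exact ⟨hCne, hS.2.1⟩
  simp only [mem_insert, forall_eq_or_imp, exists_eq_or_imp]
  refine ⟨fun _ x hx => ?_, fun A hA hint x hx => ?_⟩
  · obtain ⟨B, hB, hBC, hxB⟩ := hcovC x hx
    exact Or.inr ⟨B, hB, hBC.ssubset_of_ne (ne_of_mem_of_not_mem hB hCS), hxB⟩
  · -- a member strictly above `C` also lies strictly above a member of `S` inside `C`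
    have hint' : ∃ B ∈ S, B ⊂ A := by
      rcases hint with hCA | hint
      · obtain ⟨y, hy⟩ := hCne
        obtain ⟨B, hB, hBC, -⟩ := hcovC y hy
        exact ⟨B, hB, hBC.trans_ssubset hCA⟩
      · exact hint
    exact Or.inr (hS.exists_mem_ssubset hA hint' hx)

lemma filter_not_ssubset (hS : IsIndexFam n S) (hD : D ∈ S) :
    IsIndexFam n (S.filter fun B => ¬ B ⊂ D) := by
  refine of_cover (mem_filter.mpr ⟨hS.1, fun h => h.2 (subset_univ D)⟩)
    (fun A hA => hS.2.1 A (mem_filter.mp hA).1)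
    (fun A hA B hB => hS.2.2.1 A (mem_filter.mp hA).1 B (mem_filter.mp hB).1) ?_
  simp only [mem_filter, and_imp]
  rintro A hA hAD ⟨B₀, ⟨hB₀, hB₀D⟩, hB₀A⟩ x hx
  have hAD' : A ≠ D := fun h => hB₀D (h ▸ hB₀A)
  obtain ⟨B, hB, hBA, hxB⟩ := hS.exists_mem_ssubset hA ⟨B₀, hB₀, hB₀A⟩ hx
  by_cases hBD : B ⊂ D
  · -- then `D` itself lies strictly between `B` and `A`
    refine ⟨D, ⟨hD, lt_irrefl D⟩, ?_, hBD.subset hxB⟩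
    rcases hS.2.2.1 A hA D hD with h | h | h
    · exact absurd (h ▸ mem_inter.mpr ⟨hx, hBD.subset hxB⟩) (notMem_empty x)
    · exact absurd (h.ssubset_of_ne hAD') hAD
    · exact h.ssubset_of_ne hAD'.symm
  · exact ⟨B, ⟨hB, hBD⟩, hBA, hxB⟩

lemma union_of_leaf (hS : IsIndexFam n S) (hD : D ∈ S) (hleaf : ∀ B ∈ S, ¬ B ⊂ D)
    {P : Finset (Finset (Fin n))} (hPne : ∀ C ∈ P, C.Nonempty) (hPD : ∀ C ∈ P, C ⊂ D)
    (hPdisj : ∀ C ∈ P, ∀ C' ∈ P, C ≠ C' → C ∩ C' = ∅) (hPcov : ∀ x ∈ D, ∃ C ∈ P, x ∈ C) :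
    IsIndexFam n (P ∪ S) := by
  have hlamP : ∀ C ∈ P, ∀ A ∈ S, A ∩ C = ∅ ∨ A ⊆ C ∨ C ⊆ A := fun C hC A hA =>
    nested_of_subset (hS.2.2.1 A hA D hD) (hPD C hC).subset fun h => absurd h (hleaf A hA)
  refine of_cover (mem_union_right P hS.1) ?_ ?_ ?_
  · simp only [mem_union]
    rintro A (hA | hA)
    exacts [hPne A hA, hS.2.1 A hA]
  · simp only [mem_union]
    rintro A (hA | hA) B (hB | hB)
    · by_cases hAB : A = B
      · exact Or.inr (Or.inl hAB.le)
      · exact Or.inl (hPdisj A hA B hB hAB)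
    · exact nested_symm (hlamP A hA B hB)
    · exact hlamP B hB A hA
    · exact hS.2.2.1 A hA B hB
  simp only [mem_union]
  rintro A (hA | hA) ⟨B, hB, hBA⟩ x hx
  · exfalso
    rcases hB with hB | hB
    · obtain ⟨y, hy⟩ := hPne B hB
      have hy' : y ∈ B ∩ A := mem_inter.mpr ⟨hy, hBA.subset hy⟩
      rw [hPdisj B hB A hA hBA.ne] at hy'
      exact notMem_empty y hy'
    · exact hleaf B hB (hBA.trans (hPD A hA))
  by_cases hAD : A = D
  · subst hAD
    obtain ⟨C, hC, hxC⟩ := hPcov x hx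
    exact ⟨C, Or.inl hC, hPD C hC, hxC⟩
  -- `A` has a proper subset in `S`: either `B` itself or, if `B` is a new piece, `D`
  have hint : ∃ B ∈ S, B ⊂ A := by
    rcases hB with hB | hB
    · refine ⟨D, hD, ?_⟩
      obtain ⟨y, hy⟩ := hPne B hB
      rcases hS.2.2.1 A hA D hD with h | h | h
      · exact absurd (h ▸ mem_inter.mpr ⟨hBA.subset hy, (hPD B hB).subset hy⟩) (notMem_empty y)
      · exact absurd (h.ssubset_of_ne hAD) (hleaf A hA)
      · exact h.ssubset_of_ne (Ne.symm hAD)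
    · exact ⟨B, hB, hBA⟩
  obtain ⟨B, hB, hBA, hxB⟩ := hS.exists_mem_ssubset hA hint hx
  exact ⟨B, Or.inr hB, hBA, hxB⟩

end IsIndexFam

lemma bval_lt_bval {A B : Finset (Fin n)} (h : A ⊂ B) : bval A < bval B := by
  obtain ⟨x, hxB, hxA⟩ := exists_of_ssubset h
  exact sum_lt_sum_of_subset h.subset hxB hxA (by positivity) fun _ _ _ => Nat.zero_le _

section dLabel

variable {B₁ B₂ : Finset (Fin n)} {S : Finset (Finset (Fin n))} {A C D : Finset (Fin n)}

lemma dLabel_mem_Qset (hQ : (Qset B₁ B₂ S).Nonempty) : dLabel B₁ B₂ S ∈ Qset B₁ B₂ S := by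
  rw [dLabel, dif_pos hQ]
  exact (exists_min_image _ bval hQ).choose_spec.1

lemma dLabel_le (hA : A ∈ Qset B₁ B₂ S) : bval (dLabel B₁ B₂ S) ≤ bval A := by
  rw [dLabel, dif_pos ⟨A, hA⟩]
  exact (exists_min_image _ bval ⟨A, hA⟩).choose_spec.2 A hA

lemma Qset_nonempty (hB₁ : B₁.Nonempty) (hB₂ : B₂.Nonempty) (hB : Disjoint B₁ B₂)
    (huniv : (univ : Finset (Fin n)) ∈ S) : (Qset B₁ B₂ S).Nonempty :=
  ⟨univ, mem_filter.mpr ⟨huniv,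
    fun h => hB₂.ne_empty (hB.symm.eq_bot_of_le ((subset_univ B₂).trans h)),
    fun h => hB₁.ne_empty (hB.eq_bot_of_le ((subset_univ B₁).trans h))⟩⟩

lemma Qset_insert (hC : C ⊆ B₁ ∨ C ⊆ B₂) : Qset B₁ B₂ (insert C S) = Qset B₁ B₂ S := by
  rw [Qset, Qset, filter_insert, if_neg (by tauto)]

lemma dLabel_insert (hC : C ⊆ B₁ ∨ C ⊆ B₂) : dLabel B₁ B₂ (insert C S) = dLabel B₁ B₂ S := by
  simp only [dLabel, Qset_insert hC]

lemma dLabel_erase (hC : C ⊆ B₁ ∨ C ⊆ B₂) : dLabel B₁ B₂ (S.erase C) = dLabel B₁ B₂ S := by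
  by_cases hCS : C ∈ S
  · conv_rhs => rw [← insert_erase hCS]
    exact (dLabel_insert hC).symm
  · rw [erase_eq_of_notMem hCS]

lemma dLabel_insert_inter_insert_inter :
    dLabel B₁ B₂ (insert (B₁ ∩ D) (insert (B₂ ∩ D) S)) = dLabel B₁ B₂ S := by
  rw [dLabel_insert (Or.inl inter_subset_left), dLabel_insert (Or.inr inter_subset_left)]

lemma subset_or_subset_of_ssubset_dLabel (hA : A ∈ S) (h : A ⊂ dLabel B₁ B₂ S) :
    A ⊆ B₁ ∨ A ⊆ B₂ := by
  by_contra hAB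
  have hAQ : A ∈ Qset B₁ B₂ S := mem_filter.mpr ⟨hA, not_or.mp hAB⟩
  exact (dLabel_le hAQ).not_gt (bval_lt_bval h)

end dLabel

section pieces

variable {B₁ B₂ D : Finset (Fin n)}

lemma inter_nonempty_of_not_subset (hB : IsCompl B₁ B₂) (hD : ¬ D ⊆ B₂) :
    (B₁ ∩ D).Nonempty := by
  rw [nonempty_iff_ne_empty, inter_comm]
  exact fun h => hD (hB.inf_left_eq_bot_iff.mp h)

lemma inter_inter_inter_eq_empty (hB : IsCompl B₁ B₂) : (B₁ ∩ D) ∩ (B₂ ∩ D) = ∅ := by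
  rw [← inter_inter_distrib_right, disjoint_iff_inter_eq_empty.mp hB.disjoint, empty_inter]

lemma inter_union_inter_eq (hB : IsCompl B₁ B₂) : (B₁ ∩ D) ∪ (B₂ ∩ D) = D := by
  have hcover : B₁ ∪ B₂ = univ := codisjoint_iff.mp hB.codisjoint
  rw [← union_inter_distrib_right, hcover, univ_inter]

lemma not_inter_subset_inter (hB : IsCompl B₁ B₂) (hD : ¬ D ⊆ B₂) :
    ¬ B₁ ∩ D ⊆ B₂ ∩ D := fun h => by
  obtain ⟨x, hx⟩ := inter_nonempty_of_not_subset hB hD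
  have : x ∈ (B₁ ∩ D) ∩ (B₂ ∩ D) := mem_inter.mpr ⟨hx, h hx⟩
  rw [inter_inter_inter_eq_empty hB] at this
  exact notMem_empty x this

end pieces

section split

variable {B₁ B₂ D : Finset (Fin n)} {S : Finset (Finset (Fin n))}

lemma exists_mem_subset_inter (hS : IsIndexFam n S) (hB : Disjoint B₁ B₂) (hD : D ∈ S)
    (hsplit : ∀ A ∈ S, A ⊂ D → A ⊆ B₁ ∨ A ⊆ B₂) (hint : ∃ A ∈ S, A ⊂ D) {x : Fin n}
    (hx : x ∈ B₁ ∩ D) : ∃ A ∈ S, A ⊆ B₁ ∩ D ∧ x ∈ A := by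
  obtain ⟨hx₁, hxD⟩ := mem_inter.mp hx
  obtain ⟨A, hA, hAD, hxA⟩ := hS.exists_mem_ssubset hD hint hxD
  rcases hsplit A hA hAD with h | h
  · exact ⟨A, hA, subset_inter h hAD.subset, hxA⟩
  · exact absurd (h hxA) (disjoint_left.mp hB hx₁)

lemma inter_mem_of_forall_not_ssubset (hS : IsIndexFam n S) (hB : Disjoint B₁ B₂)
    (hD : D ∈ S) (hsplit : ∀ A ∈ S, A ⊂ D → A ⊆ B₁ ∨ A ⊆ B₂) (hint : ∃ A ∈ S, A ⊂ D)
    (hne : (B₁ ∩ D).Nonempty) (hmin : ∀ A ∈ S, ¬ A ⊂ B₁ ∩ D) : B₁ ∩ D ∈ S := by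
  obtain ⟨x, hx⟩ := hne
  obtain ⟨A, hA, hAC, -⟩ := exists_mem_subset_inter hS hB hD hsplit hint hx
  rcases hAC.eq_or_ssubset with rfl | h
  exacts [hA, absurd h (hmin A hA)]

lemma filter_ssubset_eq_pair (hS : IsIndexFam n S) (hB : IsCompl B₁ B₂) (hD : D ∈ S)
    (hD₁ : ¬ D ⊆ B₁) (hD₂ : ¬ D ⊆ B₂) (hsplit : ∀ A ∈ S, A ⊂ D → A ⊆ B₁ ∨ A ⊆ B₂)
    (hint : ∃ A ∈ S, A ⊂ D) (h₁ : ∀ A ∈ S, ¬ A ⊂ B₁ ∩ D) (h₂ : ∀ A ∈ S, ¬ A ⊂ B₂ ∩ D) :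
    S.filter (· ⊂ D) = {B₁ ∩ D, B₂ ∩ D} := by
  ext A
  simp only [mem_filter, mem_insert, mem_singleton]
  constructor
  · rintro ⟨hA, hAD⟩
    exact (hsplit A hA hAD).imp
      (fun h => (subset_inter h hAD.subset).eq_of_not_lt (h₁ A hA))
      fun h => (subset_inter h hAD.subset).eq_of_not_lt (h₂ A hA)
  · rintro (rfl | rfl)
    · exact ⟨inter_mem_of_forall_not_ssubset hS hB.disjoint hD hsplit hint
        (inter_nonempty_of_not_subset hB hD₂) h₁, inf_lt_right.mpr hD₁⟩
    · exact ⟨inter_mem_of_forall_not_ssubset hS hB.symm.disjoint hD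
        (fun A hA hAD => (hsplit A hA hAD).symm) hint (inter_nonempty_of_not_subset hB.symm hD₁)
        h₂, inf_lt_right.mpr hD₂⟩

lemma IsIndexFam.insert_inter (hS : IsIndexFam n S) (hB : Disjoint B₁ B₂) (hD : D ∈ S)
    (hsplit : ∀ A ∈ S, A ⊂ D → A ⊆ B₁ ∨ A ⊆ B₂) (hint : ∃ A ∈ S, A ⊂ B₁ ∩ D) :
    IsIndexFam n (insert (B₁ ∩ D) S) := by
  obtain ⟨A₀, hA₀, hA₀C⟩ := hint
  refine hS.insert_of_covered ?_ (fun A hA => ?_) fun x hx => ?_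
  · obtain ⟨x, hx, -⟩ := exists_of_ssubset hA₀C
    exact ⟨x, hx⟩
  · refine nested_of_subset (hS.2.2.1 A hA D hD) inter_subset_right fun hAD => ?_
    rcases hsplit A hA hAD with h | h
    · exact Or.inr (subset_inter h hAD.subset)
    · exact Or.inl (disjoint_iff_inter_eq_empty.mp
        ((hB.symm.mono_left h).mono_right inter_subset_left))
  · exact exists_mem_subset_inter hS hB hD hsplit ⟨A₀, hA₀, hA₀C.trans_le inter_subset_right⟩ hx

lemma IsIndexFam.insert_insert_inter_of_leaf (hS : IsIndexFam n S) (hB : IsCompl B₁ B₂)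
    (hD : D ∈ S) (hD₁ : ¬ D ⊆ B₁) (hD₂ : ¬ D ⊆ B₂) (hleaf : ∀ A ∈ S, ¬ A ⊂ D) :
    IsIndexFam n (insert (B₁ ∩ D) (insert (B₂ ∩ D) S)) := by
  have hU : insert (B₁ ∩ D) (insert (B₂ ∩ D) S) = {B₁ ∩ D, B₂ ∩ D} ∪ S := by
    rw [insert_union, singleton_union]
  have hdisj := inter_inter_inter_eq_empty (D := D) hB
  rw [hU]
  refine hS.union_of_leaf hD hleaf ?_ ?_ ?_ fun x hx => ?_
  · simp only [mem_insert, mem_singleton, forall_eq_or_imp, forall_eq]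
    exact ⟨inter_nonempty_of_not_subset hB hD₂, inter_nonempty_of_not_subset hB.symm hD₁⟩
  · simp only [mem_insert, mem_singleton, forall_eq_or_imp, forall_eq]
    exact ⟨inf_lt_right.mpr hD₁, inf_lt_right.mpr hD₂⟩
  · simp only [mem_insert, mem_singleton]
    rintro C (rfl | rfl) C' (rfl | rfl) hne
    exacts [absurd rfl hne, hdisj, inter_comm (B₂ ∩ D) _ ▸ hdisj, absurd rfl hne]
  · rw [← inter_union_inter_eq (D := D) hB, mem_union] at hx
    rcases hx with hx | hx
    exacts [⟨_, mem_insert_self _ _, hx⟩, ⟨_, mem_insert_of_mem (mem_singleton_self _), hx⟩]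

end split

section psi

variable {B₁ B₂ : Finset (Fin n)} {T : Finset (Finset (Fin n))}

lemma psiInv_insert_inter_left (hB : IsCompl B₁ B₂) (hQ : (Qset B₁ B₂ T).Nonempty) :
    psiInv B₁ B₂ (insert (B₁ ∩ dLabel B₁ B₂ T) T) = psiInv B₁ B₂ T := by
  obtain ⟨-, -, hD₂⟩ := mem_filter.mp (dLabel_mem_Qset hQ)
  have h₁₂ := not_inter_subset_inter hB hD₂
  simp only [psiInv, dLabel_insert (Or.inl inter_subset_left), filter_insert, inter_subset_right,
    not_true, if_false, lt_irrefl, h₁₂, mt subset_of_ssubset h₁₂]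

lemma psiInv_insert_inter_right_iff (hB : IsCompl B₁ B₂) (hQ : (Qset B₁ B₂ T).Nonempty)
    (hC : B₂ ∩ dLabel B₁ B₂ T ∉ T) :
    psiInv B₁ B₂ (insert (B₂ ∩ dLabel B₁ B₂ T) T) = psiInv B₁ B₂ T ↔
      ∀ A ∈ T, ¬ A ⊂ B₁ ∩ dLabel B₁ B₂ T := by
  obtain ⟨-, hD₁, -⟩ := mem_filter.mp (dLabel_mem_Qset hQ)
  have h₂₁ := not_inter_subset_inter hB.symm hD₁
  simp only [psiInv, dLabel_insert (Or.inr inter_subset_left), filter_insert, inter_subset_right,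
    not_true, if_false, lt_irrefl, mt subset_of_ssubset h₂₁, subset_refl, if_true]
  rw [card_insert_of_notMem fun h => hC (mem_filter.mp h).1]
  simp [mul_add_one, card_eq_zero, filter_eq_empty_iff]

lemma psiInv_insert_insert_of_leaf (hB : IsCompl B₁ B₂) (hQ : (Qset B₁ B₂ T).Nonempty)
    (hleaf : ∀ A ∈ T, ¬ A ⊂ dLabel B₁ B₂ T) :
    psiInv B₁ B₂ (insert (B₁ ∩ dLabel B₁ B₂ T) (insert (B₂ ∩ dLabel B₁ B₂ T) T)) =
      psiInv B₁ B₂ T := by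
  obtain ⟨-, -, hD₂⟩ := mem_filter.mp (dLabel_mem_Qset hQ)
  have hd : dLabel B₁ B₂ (insert (B₂ ∩ dLabel B₁ B₂ T) T) = dLabel B₁ B₂ T :=
    dLabel_insert (Or.inr inter_subset_left)
  have hQ' : (Qset B₁ B₂ (insert (B₂ ∩ dLabel B₁ B₂ T) T)).Nonempty := by
    rwa [Qset_insert (Or.inr inter_subset_left)]
  have hleft := psiInv_insert_inter_left hB hQ'
  rw [hd] at hleft
  rw [hleft, psiInv_insert_inter_right_iff hB hQ fun h => hleaf _ h (inf_lt_right.mpr hD₂)]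
  exact fun A hA h => hleaf A hA (h.trans_le inter_subset_right)

end psi

section contractions

variable {B₁ B₂ B : Finset (Fin n)} {U T : Finset (Finset (Fin n))}

lemma ordCon_inter_dLabel_iff (hB : B ⊆ B₁ ∨ B ⊆ B₂) (hQ : (Qset B₁ B₂ T).Nonempty) :
    OrdCon U T (B ∩ dLabel B₁ B₂ U) ↔
      B ∩ dLabel B₁ B₂ T ∉ T ∧ (∃ A ∈ T, A ⊂ B ∩ dLabel B₁ B₂ T) ∧
        U = insert (B ∩ dLabel B₁ B₂ T) T := by
  have hsub : ∀ D : Finset (Fin n), B ∩ D ⊆ B₁ ∨ B ∩ D ⊆ B₂ := fun D =>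
    hB.imp inter_subset_left.trans inter_subset_left.trans
  constructor
  · rintro ⟨⟨hCU, A, hA, hAC⟩, -, rfl⟩
    rw [dLabel_erase (hsub _)]
    exact ⟨notMem_erase _ _, ⟨A, mem_erase.mpr ⟨hAC.ne, hA⟩, hAC⟩, (insert_erase hCU).symm⟩
  · rintro ⟨hCT, ⟨A, hA, hAC⟩, rfl⟩
    obtain ⟨-, hD₁, hD₂⟩ := mem_filter.mp (dLabel_mem_Qset hQ)
    have hCD : B ∩ dLabel B₁ B₂ T ⊂ dLabel B₁ B₂ T :=
      inf_lt_right.mpr fun h => hB.elim (fun hB => hD₁ (h.trans hB)) fun hB => hD₂ (h.trans hB)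
    rw [dLabel_insert (hsub _)]
    exact ⟨⟨mem_insert_self _ _, A, mem_insert_of_mem hA, hAC⟩,
      (hCD.trans_le (subset_univ _)).ne, (erase_insert hCT).symm⟩

lemma typeP_iff (hB : IsCompl B₁ B₂) (hQ : (Qset B₁ B₂ T).Nonempty) :
    TypeP B₁ B₂ U T ↔ (∀ A ∈ T, ¬ A ⊂ dLabel B₁ B₂ T) ∧
      U = insert (B₁ ∩ dLabel B₁ B₂ T) (insert (B₂ ∩ dLabel B₁ B₂ T) T) := by
  constructor
  · rintro ⟨⟨-, -, rfl⟩, hfil⟩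
    have hU := eq_insert_insert_filter_not hfil
    have hd : dLabel B₁ B₂ (U.filter fun B => ¬ B ⊂ dLabel B₁ B₂ U) = dLabel B₁ B₂ U := by
      conv_rhs => rw [hU]
      exact dLabel_insert_inter_insert_inter.symm
    rw [hd]
    exact ⟨fun A hA => (mem_filter.mp hA).2, hU⟩
  · rintro ⟨hleaf, rfl⟩
    obtain ⟨hD, hD₁, hD₂⟩ := mem_filter.mp (dLabel_mem_Qset hQ)
    set D := dLabel B₁ B₂ T
    have h₁D : B₁ ∩ D ⊂ D := inf_lt_right.mpr hD₁
    have h₂D : B₂ ∩ D ⊂ D := inf_lt_right.mpr hD₂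
    have hpieces : ∀ X ∈ ({B₁ ∩ D, B₂ ∩ D} : Finset _), ∀ Y ∈ ({B₁ ∩ D, B₂ ∩ D} : Finset _),
        ¬ X ⊂ Y := by
      simp only [mem_insert, mem_singleton]
      rintro X (rfl | rfl) Y (rfl | rfl) h
      exacts [lt_irrefl _ h, not_inter_subset_inter hB hD₂ h.subset,
        not_inter_subset_inter hB.symm hD₁ h.subset, lt_irrefl _ h]
    have hdU : dLabel B₁ B₂ (insert (B₁ ∩ D) (insert (B₂ ∩ D) T)) = D :=
      dLabel_insert_inter_insert_inter
    simp only [TypeP, ExcCon, IsInternal, hdU, filter_insert, h₁D, h₂D, not_true, if_true,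
      if_false, filter_true_of_mem hleaf, filter_false_of_mem hleaf, insert_empty, and_true]
    refine ⟨⟨mem_insert_of_mem (mem_insert_of_mem hD), _, mem_insert_self _ _, h₁D⟩, ?_⟩
    have hmem : ∀ Z ∈ insert (B₁ ∩ D) (insert (B₂ ∩ D) T), Z ⊂ D →
        Z ∈ ({B₁ ∩ D, B₂ ∩ D} : Finset _) := by
      simp only [mem_insert, mem_singleton]
      rintro Z (rfl | rfl | hZ) hZD
      exacts [Or.inl rfl, Or.inr rfl, absurd hZD (hleaf Z hZ)]
    rintro X hX hXD ⟨-, Y, hY, hYX⟩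
    exact hpieces Y (hmem Y hY (hYX.trans hXD)) X (hmem X hX hXD) hYX

end contractions

/-- The three shapes of a `ψ`-preserving contraction `U → T` of type `P`, `Q1`, `Q2`, described
from its target `T`. -/
def PsiEdge (B₁ B₂ : Finset (Fin n)) (U T : Finset (Finset (Fin n))) : Prop :=
  let D := dLabel B₁ B₂ T
  ((∀ A ∈ T, ¬ A ⊂ D) ∧ U = insert (B₁ ∩ D) (insert (B₂ ∩ D) T)) ∨
  (B₁ ∩ D ∉ T ∧ (∃ A ∈ T, A ⊂ B₁ ∩ D) ∧ U = insert (B₁ ∩ D) T) ∨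
  (B₂ ∩ D ∉ T ∧ (∃ A ∈ T, A ⊂ B₂ ∩ D) ∧ (∀ A ∈ T, ¬ A ⊂ B₁ ∩ D) ∧ U = insert (B₂ ∩ D) T)

lemma typedCon_and_psiInv_eq_iff {B₁ B₂ : Finset (Fin n)} {U T : Finset (Finset (Fin n))}
    (hB : IsCompl B₁ B₂) (hQ : (Qset B₁ B₂ T).Nonempty) :
    TypedCon B₁ B₂ U T ∧ psiInv B₁ B₂ U = psiInv B₁ B₂ T ↔ PsiEdge B₁ B₂ U T := by
  rw [TypedCon, or_and_right, or_and_right, typeP_iff hB hQ, TypeQ1,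
    ordCon_inter_dLabel_iff (Or.inl subset_rfl) hQ, TypeQ2,
    ordCon_inter_dLabel_iff (Or.inr subset_rfl) hQ]
  refine or_congr ?_ (or_congr ?_ ?_)
  · exact and_iff_left_of_imp fun ⟨hleaf, hU⟩ => hU ▸ psiInv_insert_insert_of_leaf hB hQ hleaf
  · exact and_iff_left_of_imp fun ⟨_, _, hU⟩ => hU ▸ psiInv_insert_inter_left hB hQ
  · constructor
    · rintro ⟨⟨hC, hint, rfl⟩, hψ⟩
      exact ⟨hC, hint, (psiInv_insert_inter_right_iff hB hQ hC).mp hψ, rfl⟩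
    · rintro ⟨hC, hint, hmin, rfl⟩
      exact ⟨⟨hC, hint, rfl⟩, (psiInv_insert_inter_right_iff hB hQ hC).mpr hmin⟩

/-- The flag records whether `S` is the source of the contraction. -/
noncomputable def partner (B₁ B₂ : Finset (Fin n)) (S : Finset (Finset (Fin n))) :
    Bool × Finset (Finset (Fin n)) :=
  let D := dLabel B₁ B₂ S
  if ∃ A ∈ S, A ⊂ B₁ ∩ D then
    if B₁ ∩ D ∈ S then (true, S.erase (B₁ ∩ D)) else (false, insert (B₁ ∩ D) S)
  else if ∃ A ∈ S, A ⊂ B₂ ∩ D then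
    if B₂ ∩ D ∈ S then (true, S.erase (B₂ ∩ D)) else (false, insert (B₂ ∩ D) S)
  else if ∃ A ∈ S, A ⊂ D then (true, S.filter fun A => ¬ A ⊂ D)
  else (false, insert (B₁ ∩ D) (insert (B₂ ∩ D) S))

def IsPsiPartner (B₁ B₂ : Finset (Fin n)) (S : Finset (Finset (Fin n)))
    (p : Bool × Finset (Finset (Fin n))) : Prop :=
  if p.1 = true then
    TypedCon B₁ B₂ S p.2 ∧ IsIndexFam n p.2 ∧ psiInv B₁ B₂ S = psiInv B₁ B₂ p.2
  else
    TypedCon B₁ B₂ p.2 S ∧ IsIndexFam n p.2 ∧ psiInv B₁ B₂ p.2 = psiInv B₁ B₂ S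

section partner

variable {B₁ B₂ : Finset (Fin n)} {S T U : Finset (Finset (Fin n))}

lemma partner_eq_of_psiEdge (h : PsiEdge B₁ B₂ U S) : partner B₁ B₂ S = (false, U) := by
  rcases h with ⟨hleaf, rfl⟩ | ⟨hC, hint, rfl⟩ | ⟨hC, hint, hmin, rfl⟩
  · have hno : ∀ B, ¬ ∃ A ∈ S, A ⊂ B ∩ dLabel B₁ B₂ S := fun B ⟨A, hA, hAC⟩ =>
      hleaf A hA (hAC.trans_le inter_subset_right)
    have hno' : ¬ ∃ A ∈ S, A ⊂ dLabel B₁ B₂ S := fun ⟨A, hA, hAD⟩ => hleaf A hA hAD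
    simp only [partner, hno, hno', if_false]
  · simp only [partner, hint, hC, if_true, if_false]
  · have hno : ¬ ∃ A ∈ S, A ⊂ B₁ ∩ dLabel B₁ B₂ S := fun ⟨A, hA, hAC⟩ => hmin A hA hAC
    simp only [partner, hno, hint, hC, if_true, if_false]

lemma partner_eq_of_typedCon (hB : IsCompl B₁ B₂) (hQ : (Qset B₁ B₂ S).Nonempty)
    (hQT : (Qset B₁ B₂ T).Nonempty) (h : TypedCon B₁ B₂ S T)
    (hψ : psiInv B₁ B₂ S = psiInv B₁ B₂ T) : partner B₁ B₂ S = (true, T) := by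
  rcases h with ⟨⟨-, hchild, rfl⟩, hfil⟩ | ⟨⟨hC, hint⟩, -, rfl⟩ | ⟨⟨hC, hint⟩, -, rfl⟩ <;>
    simp only [partner]
  · set D := dLabel B₁ B₂ S
    have hmem : ∀ C ∈ ({B₁ ∩ D, B₂ ∩ D} : Finset _), C ∈ S ∧ C ⊂ D := fun C hC =>
      mem_filter.mp (hfil ▸ hC)
    have hno : ∀ C ∈ ({B₁ ∩ D, B₂ ∩ D} : Finset _), ¬ ∃ A ∈ S, A ⊂ C := fun C hC hint =>
      hchild C (hmem C hC).1 (hmem C hC).2 ⟨(hmem C hC).1, hint⟩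
    have hint : ∃ A ∈ S, A ⊂ D := ⟨_, hmem _ (mem_insert_self _ _)⟩
    simp only [hno _ (mem_insert_self _ _), hno _ (mem_insert_of_mem (mem_singleton_self _)),
      hint, if_true, if_false]
  · simp only [hint, hC, if_true]
  · set D := dLabel B₁ B₂ S
    obtain ⟨-, hD₁, -⟩ := mem_filter.mp (dLabel_mem_Qset hQ)
    have hψ' := psiInv_insert_inter_right_iff hB hQT
    rw [dLabel_erase (Or.inr inter_subset_left), insert_erase hC] at hψ'
    have hmin := (hψ' (notMem_erase _ _)).mp hψ
    have hno : ¬ ∃ A ∈ S, A ⊂ B₁ ∩ D := by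
      rintro ⟨A, hA, hAC⟩
      by_cases hAC₂ : A = B₂ ∩ D
      · exact not_inter_subset_inter hB.symm hD₁ (hAC₂ ▸ hAC).subset
      · exact hmin A (mem_erase.mpr ⟨hAC₂, hA⟩) hAC
    simp only [hno, hint, hC, if_true, if_false]

lemma isPsiPartner_true (hB : IsCompl B₁ B₂) (hQT : (Qset B₁ B₂ T).Nonempty)
    (hT : IsIndexFam n T) (h : PsiEdge B₁ B₂ S T) : IsPsiPartner B₁ B₂ S (true, T) := by
  obtain ⟨hcon, hψ⟩ := (typedCon_and_psiInv_eq_iff hB hQT).mpr h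
  simpa only [IsPsiPartner, if_true] using ⟨hcon, hT, hψ⟩

lemma isPsiPartner_false (hB : IsCompl B₁ B₂) (hQ : (Qset B₁ B₂ S).Nonempty)
    (hT : IsIndexFam n T) (h : PsiEdge B₁ B₂ T S) : IsPsiPartner B₁ B₂ S (false, T) := by
  obtain ⟨hcon, hψ⟩ := (typedCon_and_psiInv_eq_iff hB hQ).mpr h
  simpa only [IsPsiPartner, Bool.false_eq_true, if_false] using ⟨hcon, hT, hψ⟩

lemma isPsiPartner_partner (hB : IsCompl B₁ B₂) (hB₁ : B₁.Nonempty) (hB₂ : B₂.Nonempty)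
    (hS : IsIndexFam n S) : IsPsiPartner B₁ B₂ S (partner B₁ B₂ S) := by
  have hQ : ∀ {T : Finset (Finset (Fin n))}, IsIndexFam n T → (Qset B₁ B₂ T).Nonempty :=
    fun hT => Qset_nonempty hB₁ hB₂ hB.disjoint hT.1
  obtain ⟨hD, hD₁, hD₂⟩ := mem_filter.mp (dLabel_mem_Qset (hQ hS))
  have hsplit : ∀ A ∈ S, A ⊂ dLabel B₁ B₂ S → A ⊆ B₁ ∨ A ⊆ B₂ := fun A hA hAD =>
    subset_or_subset_of_ssubset_dLabel hA hAD
  simp only [partner]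
  set D := dLabel B₁ B₂ S with hDdef
  split_ifs with h₁ hC₁ h₂ hC₂ hint
  · have hT := hS.erase ⟨hC₁, h₁⟩ ((inf_lt_right.mpr hD₁).trans_le (subset_univ _)).ne
    refine isPsiPartner_true hB (hQ hT) hT ?_
    obtain ⟨A, hA, hAC⟩ := h₁
    simp only [PsiEdge, dLabel_erase (Or.inl inter_subset_left)]
    exact Or.inr (Or.inl ⟨notMem_erase _ _, ⟨A, mem_erase.mpr ⟨hAC.ne, hA⟩, hAC⟩,
      (insert_erase hC₁).symm⟩)
  · exact isPsiPartner_false hB (hQ hS) (hS.insert_inter hB.disjoint hD hsplit h₁)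
      (Or.inr (Or.inl ⟨hC₁, h₁, rfl⟩))
  · have hT := hS.erase ⟨hC₂, h₂⟩ ((inf_lt_right.mpr hD₂).trans_le (subset_univ _)).ne
    refine isPsiPartner_true hB (hQ hT) hT ?_
    obtain ⟨A, hA, hAC⟩ := h₂
    simp only [PsiEdge, dLabel_erase (Or.inr inter_subset_left)]
    exact Or.inr (Or.inr ⟨notMem_erase _ _, ⟨A, mem_erase.mpr ⟨hAC.ne, hA⟩, hAC⟩,
      fun A hA hAC => h₁ ⟨A, mem_of_mem_erase hA, hAC⟩, (insert_erase hC₂).symm⟩)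
  · exact isPsiPartner_false hB (hQ hS)
      (hS.insert_inter hB.symm.disjoint hD (fun A hA hAD => (hsplit A hA hAD).symm) h₂)
      (Or.inr (Or.inr ⟨hC₂, h₂, fun A hA hAC => h₁ ⟨A, hA, hAC⟩, rfl⟩))
  · have hfil := filter_ssubset_eq_pair hS hB hD hD₁ hD₂ hsplit hint
      (fun A hA hAC => h₁ ⟨A, hA, hAC⟩) fun A hA hAC => h₂ ⟨A, hA, hAC⟩
    have hU := eq_insert_insert_filter_not hfil
    have hd : D = dLabel B₁ B₂ (S.filter fun A => ¬ A ⊂ D) :=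
      hDdef.trans ((congrArg _ hU).trans dLabel_insert_inter_insert_inter)
    have hT := hS.filter_not_ssubset hD
    refine isPsiPartner_true hB (hQ hT) hT ?_
    simp only [PsiEdge, ← hd]
    exact Or.inl ⟨fun A hA => (mem_filter.mp hA).2, hU⟩
  · have hleaf : ∀ A ∈ S, ¬ A ⊂ D := fun A hA hAD => hint ⟨A, hA, hAD⟩
    exact isPsiPartner_false hB (hQ hS) (hS.insert_insert_inter_of_leaf hB hD hD₁ hD₂ hleaf)
      (Or.inl ⟨hleaf, rfl⟩)

lemma eq_partner_of_isPsiPartner (hB : IsCompl B₁ B₂) (hB₁ : B₁.Nonempty) (hB₂ : B₂.Nonempty)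
    (hS : IsIndexFam n S) {p : Bool × Finset (Finset (Fin n))} (hp : IsPsiPartner B₁ B₂ S p) :
    p = partner B₁ B₂ S := by
  have hQS := Qset_nonempty hB₁ hB₂ hB.disjoint hS.1
  obtain ⟨_ | _, T⟩ := p
  · obtain ⟨hcon, -, hψ⟩ := hp
    exact (partner_eq_of_psiEdge ((typedCon_and_psiInv_eq_iff hB hQS).mp ⟨hcon, hψ⟩)).symm
  · obtain ⟨hcon, hT, hψ⟩ := hp
    exact (partner_eq_of_typedCon hB hQS (Qset_nonempty hB₁ hB₂ hB.disjoint hT.1) hcon hψ).symm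

end partner

theorem stmt19_general (n : ℕ) (B₁ B₂ : Finset (Fin n))
    (hB₁ : B₁.Nonempty) (hB₂ : B₂.Nonempty) (hdisj : B₁ ∩ B₂ = ∅)
    (hcover : B₁ ∪ B₂ = Finset.univ)
    (S : Finset (Finset (Fin n))) (hS : IsIndexFam n S) :
    ∃! p : Bool × Finset (Finset (Fin n)),
      if p.1 = true then
        TypedCon B₁ B₂ S p.2 ∧ IsIndexFam n p.2 ∧ psiInv B₁ B₂ S = psiInv B₁ B₂ p.2
      else
        TypedCon B₁ B₂ p.2 S ∧ IsIndexFam n p.2 ∧ psiInv B₁ B₂ p.2 = psiInv B₁ B₂ S := by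
  have hB : IsCompl B₁ B₂ :=
    ⟨disjoint_iff_inter_eq_empty.mpr hdisj, codisjoint_iff.mpr hcover⟩
  exact ⟨partner B₁ B₂ S, isPsiPartner_partner hB hB₁ hB₂ hS,
    fun p hp => eq_partner_of_isPsiPartner hB hB₁ hB₂ hS hp⟩

/-- Fix a 2-block set partition `{B₁, B₂}` of `[n]` (`n ≥ 2`).  For every index tree
`T` of order `n` (identified with its label family `S`), among the contractions of
types `P`, `Q1`, `Q2` having `T` as source or target, exactly one preserves the
invariant `ψ`.  (The pair is recorded as a direction `Bool` together with the other
tree; in particular index trees are partitioned into pairs `{T, T'}` with `T → T'` a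
`ψ`-preserving contraction.) -/
theorem stmt19 (n : ℕ) (hn : 2 ≤ n) (B₁ B₂ : Finset (Fin n))
    (hB₁ : B₁.Nonempty) (hB₂ : B₂.Nonempty) (hdisj : B₁ ∩ B₂ = ∅)
    (hcover : B₁ ∪ B₂ = Finset.univ)
    (S : Finset (Finset (Fin n))) (hS : IsIndexFam n S) :
    ∃! p : Bool × Finset (Finset (Fin n)),
      if p.1 = true then
        TypedCon B₁ B₂ S p.2 ∧ IsIndexFam n p.2 ∧ psiInv B₁ B₂ S = psiInv B₁ B₂ p.2
      else
        TypedCon B₁ B₂ p.2 S ∧ IsIndexFam n p.2 ∧ psiInv B₁ B₂ p.2 = psiInv B₁ B₂ S :=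
  stmt19_general n B₁ B₂ hB₁ hB₂ hdisj hcover S hS
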